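/- Let A, B be unital *-algebras, Θ a unit-preserving *-automorphism of A ⊗ B, ω a state on A, σ a state on B. Suppose a ∈ A satisfies Θ(a ⊗ 1) = a ⊗ 1. Then the non-selectively updated state ω̃ := J_σ(1)(ω) (where J_σ(b)(ω)(x) = (ω ⊗ σ)(Θ(x ⊗ b))) satisfies ω̃(a) = ω(a). That is, a non-selective probe measurement does not change expectation values of observables on which Θ acts trivially. -/
import Mathlib


open scoped ComplexOrder

open TensorProduct

/-- Non-signalling: a non-selective probe measurement leaves expectation values
of observables on which Θ acts trivially unchanged. -/
theorem nonselective_no_signalling {A B : Type*} [Ring A] [Algebra ℂ A] [StarRing A]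
    [StarModule ℂ A] [Ring B] [Algebra ℂ B] [StarRing B] [StarModule ℂ B]
    (Θ : (A ⊗[ℂ] B) ≃ₐ[ℂ] (A ⊗[ℂ] B))
    (st : A ⊗[ℂ] B → A ⊗[ℂ] B)
    (hst : ∀ (a : A) (b : B), st (a ⊗ₜ[ℂ] b) = star a ⊗ₜ[ℂ] star b)
    (hΘstar : ∀ t : A ⊗[ℂ] B, Θ (st t) = st (Θ t))
    (ω : A →ₗ[ℂ] ℂ) (hωpos : ∀ a : A, 0 ≤ ω (star a * a)) (hωone : ω 1 = 1)
    (σ : B →ₗ[ℂ] ℂ) (hσpos : ∀ b : B, 0 ≤ σ (star b * b)) (hσone : σ 1 = 1)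
    (a : A) (ha : Θ (a ⊗ₜ[ℂ] (1 : B)) = a ⊗ₜ[ℂ] (1 : B)) :
    ((TensorProduct.lid ℂ ℂ).toLinearMap ∘ₗ TensorProduct.map ω σ)
        (Θ (a ⊗ₜ[ℂ] (1 : B))) = ω a := by
  rw [ha]; simp [hσone]
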